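/- For n ≥ 1, the identity Σ_{k=1}^{n} k² · (n-1)!/(n-k)! · n^(n-k-1) = n^(n-1) + (n-1)! · Σ_{j=0}^{n-2} n^j/j! holds; both sides count the connected endofunctions on {1,...,n}. -/

import Mathlib

def ConnFun {n : ℕ} (f : Fin n → Fin n) : Prop :=
  Nonempty (Fin n) ∧ ∀ i j, Relation.EqvGen (fun a b => f a = b) i j

/-!
Count pairs `(z, f)` with `f` connected. Following the orbit of `z` up to its first repetition
gives an injective path `z = x 0, …, x m` together with the index `j ≤ m` such that
`f (x m) = x j`; off the path, `f` is a map without periodic points outside the path, i.e. a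
forest rooted in the path. There are `n.descFactorial (m + 1)` paths, `m + 1` choices of `j` and
`A(n - m - 1)` forests, where `A(b)`, the number of forests on a `b`-set rooted in its complement,
satisfies `A(b) * n = (n - b) * n ^ b` (generalized Cayley formula). This follows by strong
induction from `n ^ b = ∑_{P ⊆ B} |P|! * A(|B \ P|)`, which sorts the maps supported on a
`b`-set `B` by their periodic points in `B`. The first identity is Abel summation with
`a i = (n - 1).descFactorial i * n ^ (n - 1 - i)`, for which
`(i + 1) * a i = n * (a i - a (i + 1))`.
-/

open Finset Function

theorem sum_Icc_one_eq_sum_range {M : Type*} [AddCommMonoid M] (f : ℕ → M) (n : ℕ) :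
    ∑ k ∈ Icc 1 n, f k = ∑ i ∈ range n, f (i + 1) := by
  rw [← Ico_add_one_right_eq_Icc, sum_Ico_eq_sum_range, Nat.add_sub_cancel]
  simp only [add_comm 1]

/-- Abel summation for `(i + 1) * a i = c * (a i - a (i + 1))`, written without subtraction. -/
theorem sum_range_sq_mul_add (a : ℕ → ℕ) (c N : ℕ)
    (h : ∀ i < N, (i + 1) * a i + c * a (i + 1) = c * a i) :
    ∑ i ∈ range N, (i + 1) ^ 2 * a i + c * N * a N = c * ∑ i ∈ range N, a i := by
  induction N with
  | zero => simp
  | succ N ih =>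
    have ih' := ih fun i hi => h i (hi.trans N.lt_add_one)
    rw [sum_range_succ, sum_range_succ]
    linear_combination ih' + (N + 1) * h N N.lt_add_one

theorem succ_mul_descFactorial_mul_pow_add {m i : ℕ} (hi : i ≤ m) :
    (i + 1) * (m.descFactorial i * (m + 1) ^ (m - i)) +
        (m + 1) * (m.descFactorial (i + 1) * (m + 1) ^ (m - (i + 1))) =
      (m + 1) * (m.descFactorial i * (m + 1) ^ (m - i)) := by
  rw [Nat.descFactorial_succ]
  obtain ⟨e, rfl⟩ := Nat.exists_eq_add_of_le hi
  cases e with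
  | zero => simp
  | succ e =>
    rw [show i + (e + 1) - i = e + 1 by omega, show i + (e + 1) - (i + 1) = e by omega]
    ring

theorem sum_sq_descFactorial_mul_pow (n : ℕ) (hn : 1 ≤ n) :
    ∑ k ∈ Icc 1 n, k ^ 2 * (n - 1).descFactorial (k - 1) * n ^ (n - k) =
      n ^ n + n * ∑ j ∈ range (n - 1), (n - 1).descFactorial (n - 1 - j) * n ^ j := by
  obtain ⟨m, rfl⟩ := Nat.exists_eq_add_of_le' hn
  set a : ℕ → ℕ := fun i => m.descFactorial i * (m + 1) ^ (m - i)
  have habel := sum_range_sq_mul_add a (m + 1) (m + 1) fun i hi =>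
    succ_mul_descFactorial_mul_pow_add (Nat.le_of_lt_succ hi)
  have ha_top : a (m + 1) = 0 := by simp [a]
  rw [ha_top, mul_zero, add_zero] at habel
  have hlhs : ∑ k ∈ Icc 1 (m + 1), k ^ 2 * m.descFactorial (k - 1) * (m + 1) ^ (m + 1 - k) =
      ∑ i ∈ range (m + 1), (i + 1) ^ 2 * a i := by
    rw [sum_Icc_one_eq_sum_range]
    refine sum_congr rfl fun i _ => ?_
    simp only [a, Nat.add_sub_cancel, Nat.add_sub_add_right, mul_assoc]
  have hrhs : ∑ i ∈ range (m + 1), a i =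
      (m + 1) ^ m + ∑ j ∈ range m, m.descFactorial (m - j) * (m + 1) ^ j := by
    rw [sum_range_succ', add_comm]
    simp only [a, Nat.sub_zero, Nat.descFactorial_zero, one_mul]
    rw [← sum_range_reflect]
    refine congrArg _ (sum_congr rfl fun j hj => ?_)
    rw [mem_range] at hj
    rw [show m - 1 - j + 1 = m - j by omega, Nat.sub_sub_self hj.le]
  simpa [hlhs, hrhs, mul_add, ← pow_succ'] using habel

theorem sum_descFactorial_mul_sub_add_mul_pow {n b : ℕ} (hb : b ≤ n) :
    ∑ p ∈ range (b + 1), b.descFactorial p * ((n - b + p) * n ^ (b - p)) = n ^ (b + 1) := by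
  suffices h : ∀ q ≤ b + 1, ∑ p ∈ range q, b.descFactorial p * ((n - b + p) * n ^ (b - p)) +
      b.descFactorial q * n ^ (b + 1 - q) = n ^ (b + 1) by
    simpa [Nat.descFactorial_of_lt] using h (b + 1) le_rfl
  intro q hq
  induction q with
  | zero => simp
  | succ q ih =>
    rw [← ih (by omega), sum_range_succ, Nat.descFactorial_succ, add_assoc]
    congr 1
    rw [show b + 1 - q = b - q + 1 by omega, show b + 1 - (q + 1) = b - q by omega]
    have hsplit : n - b + q + (b - q) = n := by omega
    calc b.descFactorial q * ((n - b + q) * n ^ (b - q)) + (b - q) * b.descFactorial q * n ^ (b - q)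
        = b.descFactorial q * n ^ (b - q) * (n - b + q + (b - q)) := by ring
      _ = b.descFactorial q * n ^ (b - q + 1) := by rw [hsplit, pow_succ, mul_assoc]

section Periodic

variable {α : Type*} {f g : α → α} {s : Set α} {x : α}

theorem mem_of_iterate_mem_of_mapsTo (hs : Set.MapsTo f s s) (hx : x ∈ periodicPts f) {a : ℕ}
    (ha : f^[a] x ∈ s) : x ∈ s := by
  have hN : a ≤ minimalPeriod f x * (a + 1) :=
    (Nat.le_succ a).trans (Nat.le_mul_of_pos_left _ (minimalPeriod_pos_of_mem_periodicPts hx))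
  rw [← ((isPeriodicPt_minimalPeriod f x).mul_const (a + 1)).eq, ← Nat.sub_add_cancel hN,
    iterate_add_apply]
  exact hs.iterate _ ha

theorem iterate_mem_of_mem_periodicPts (hf : ∀ y ∉ s, f y = y) (hx : x ∈ periodicPts f)
    (hxs : x ∈ s) (a : ℕ) : f^[a] x ∈ s := by
  by_contra ha
  exact mem_of_iterate_mem_of_mapsTo (s := sᶜ) (fun y hy => by rwa [Set.mem_compl_iff, hf y hy])
    hx ha hxs

theorem iterate_eq_of_eqOn (hfg : Set.EqOn f g s) (hx : ∀ a, f^[a] x ∈ s) (a : ℕ) :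
    f^[a] x = g^[a] x := by
  induction a with
  | zero => rfl
  | succ a ih => rw [iterate_succ_apply', iterate_succ_apply', ← ih, hfg (hx a)]

theorem mem_periodicPts_of_eqOn (hfg : Set.EqOn f g s) (hx : ∀ a, f^[a] x ∈ s)
    (hfx : x ∈ periodicPts f) : x ∈ periodicPts g := by
  obtain ⟨p, hp, hpx⟩ := hfx
  refine mk_mem_periodicPts hp ?_
  rw [IsPeriodicPt, IsFixedPt, ← iterate_eq_of_eqOn hfg hx]
  exact hpx

theorem exists_iterate_eq_iterate [Finite α] (f : α → α) (z : α) :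
    ∃ m, ∃ j < m, f^[m] z = f^[j] z := by
  obtain ⟨a, b, hab, h⟩ := Finite.exists_ne_map_eq_of_infinite (f^[·] z)
  rcases Nat.lt_or_gt_of_ne hab with hlt | hlt
  · exact ⟨b, a, hlt, h.symm⟩
  · exact ⟨a, b, hlt, h⟩

theorem exists_iterate_mem_periodicPts [Finite α] (f : α → α) (z : α) :
    ∃ a, f^[a] z ∈ periodicPts f := by
  obtain ⟨m, j, hj, h⟩ := exists_iterate_eq_iterate f z
  refine ⟨j, mk_mem_periodicPts (Nat.sub_pos_of_lt hj) ?_⟩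
  rw [IsPeriodicPt, IsFixedPt, ← iterate_add_apply, Nat.sub_add_cancel hj.le, h]

theorem eqvGen_iterate_apply (f : α → α) (x : α) (a : ℕ) :
    Relation.EqvGen (fun a b => f a = b) x (f^[a] x) := by
  induction a with
  | zero => exact .refl x
  | succ a ih => exact .trans _ _ _ ih (.rel _ _ (iterate_succ_apply' f a x).symm)

theorem eqvGen_iff_exists_iterate_eq {x y : α} :
    Relation.EqvGen (fun a b => f a = b) x y ↔ ∃ a b, f^[a] x = f^[b] y := by
  constructor
  · intro h
    induction h with
    | rel x y hxy => exact ⟨1, 0, hxy⟩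
    | refl x => exact ⟨0, 0, rfl⟩
    | symm x y _ ih =>
      obtain ⟨a, b, h⟩ := ih
      exact ⟨b, a, h.symm⟩
    | trans x y w _ _ ihxy ihyw =>
      obtain ⟨a, b, hab⟩ := ihxy
      obtain ⟨c, d, hcd⟩ := ihyw
      refine ⟨c + a, b + d, ?_⟩
      rw [iterate_add_apply, hab, ← iterate_add_apply, add_comm, iterate_add_apply, hcd,
        ← iterate_add_apply]
  · rintro ⟨a, b, h⟩
    exact .trans _ _ _ (eqvGen_iterate_apply f x a) (h ▸ .symm _ _ (eqvGen_iterate_apply f y b))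

theorem semiconj_extend {ι : Type*} {e : ι → α} (he : Injective e) (τ : ι → ι) (g : α → α) :
    Semiconj e τ (extend e (e ∘ τ) g) :=
  fun i => (he.extend_apply (e ∘ τ) g i).symm

end Periodic

section Forests

variable {α : Type*}

/-- The functional graph of such an `f`, restricted to `s`, is a forest whose roots point out
of `s`. -/
def IsAcyclicOn (s : Set α) (f : α → α) : Prop :=
  (∀ x ∉ s, f x = x) ∧ ∀ x ∈ s, x ∉ periodicPts f

variable [DecidableEq α]

def supportedEquiv (B : Finset α) : {f : α → α // ∀ x ∉ B, f x = x} ≃ (B → α) where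
  toFun f x := f.1 x
  invFun h := ⟨fun y => if hy : y ∈ B then h ⟨y, hy⟩ else y, fun y hy => dif_neg hy⟩
  left_inv f := Subtype.ext <| funext fun y => by
    by_cases hy : y ∈ B
    · simp [hy]
    · simp [hy, f.2 y hy]
  right_inv h := funext fun x => by simp

theorem card_supported [Fintype α] (B : Finset α) :
    Nat.card {f : α → α // ∀ x ∉ B, f x = x} = Fintype.card α ^ #B := by
  rw [Nat.card_congr (supportedEquiv B), Nat.card_fun]
  simp

theorem mem_periodicPts_extend_iff {B P : Finset α} (hPB : P ⊆ B) (σ : Equiv.Perm P)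
    {g : α → α} (hg : IsAcyclicOn ↑(B \ P) g) {x : α} (hx : x ∈ B) :
    x ∈ periodicPts (extend Subtype.val (Subtype.val ∘ σ) g) ↔ x ∈ P := by
  set f := extend Subtype.val (Subtype.val ∘ σ) g
  have hval : Injective (Subtype.val : P → α) := Subtype.val_injective
  have hfP : Set.MapsTo f ↑P ↑P := by
    simpa using (semiconj_extend hval σ g).mapsTo_range
  have hfg : ∀ y ∉ P, f y = g y := fun y hy =>
    extend_apply' _ _ _ fun ⟨a, ha⟩ => hy (ha ▸ a.2)
  constructor
  · intro hxf
    by_contra hxP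
    have hfB : ∀ y ∉ B, f y = y := fun y hy => by
      rw [hfg y (fun h => hy (hPB h)), hg.1 y (by simp [hy])]
    have horbit : ∀ a, f^[a] x ∈ (↑(B \ P) : Set α) := fun a => by
      rw [coe_sdiff]
      exact ⟨iterate_mem_of_mem_periodicPts hfB hxf hx a,
        fun h => hxP (mem_of_iterate_mem_of_mapsTo hfP hxf h)⟩
    exact hg.2 x (horbit 0)
      (mem_periodicPts_of_eqOn (fun y hy => hfg y (mem_sdiff.1 hy).2) horbit hxf)
  · intro hxP
    exact (semiconj_extend hval σ g).mapsTo_periodicPts (σ.injective.mem_periodicPts ⟨x, hxP⟩)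

noncomputable def extendPerm (B : Finset α) :
    (Σ P : B.powerset, Equiv.Perm P.1 × {g : α → α // IsAcyclicOn ↑(B \ P.1) g}) →
      {f : α → α // ∀ x ∉ B, f x = x} :=
  fun ⟨P, σ, g⟩ => ⟨extend Subtype.val (Subtype.val ∘ σ) g.1, fun x hx => by
    have hxP : x ∉ P.1 := fun h => hx (mem_powerset.1 P.2 h)
    rw [extend_apply' _ _ _ fun ⟨a, ha⟩ => hxP (ha ▸ a.2), g.2.1 x (by simp [hx])]⟩

theorem extendPerm_injective (B : Finset α) : Injective (extendPerm B) := by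
  rintro ⟨⟨P, hP⟩, σ, g⟩ ⟨⟨P', hP'⟩, σ', g'⟩ h
  have hf := congrArg Subtype.val h
  simp only [extendPerm] at hf
  have hPB := mem_powerset.1 hP
  have hPB' := mem_powerset.1 hP'
  obtain rfl : P = P' := by
    ext x
    by_cases hx : x ∈ B
    · rw [← mem_periodicPts_extend_iff hPB σ g.2 hx, ← mem_periodicPts_extend_iff hPB' σ' g'.2 hx,
        hf]
    · exact iff_of_false (fun h => hx (hPB h)) (fun h => hx (hPB' h))
  obtain rfl : σ = σ' := Equiv.ext fun y => Subtype.val_injective <| by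
    have := congrFun hf y
    rwa [Subtype.val_injective.extend_apply, Subtype.val_injective.extend_apply] at this
  obtain rfl : g = g' := Subtype.ext <| funext fun y => by
    by_cases hy : y ∈ P
    · rw [g.2.1 y (by simp [hy]), g'.2.1 y (by simp [hy])]
    · have := congrFun hf y
      rwa [extend_apply' _ _ _ fun ⟨a, ha⟩ => hy (ha ▸ a.2),
        extend_apply' _ _ _ fun ⟨a, ha⟩ => hy (ha ▸ a.2)] at this
  rfl

theorem extendPerm_surjective [Finite α] (B : Finset α) : Surjective (extendPerm B) := by
  classical
  rintro ⟨f, hf⟩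
  set P := B.filter (· ∈ periodicPts f)
  have hfP : ∀ y ∈ P, f y ∈ P := fun y hy => by
    rw [mem_filter] at hy ⊢
    exact ⟨iterate_mem_of_mem_periodicPts (s := ↑B) hf hy.2 hy.1 1,
      (bijOn_periodicPts f).mapsTo hy.2⟩
  let σ : Equiv.Perm P := Equiv.ofBijective (fun y => ⟨f y, hfP y y.2⟩) <|
    Finite.injective_iff_bijective.1 fun y y' h => Subtype.val_injective <|
      (bijOn_periodicPts f).injOn (mem_filter.1 y.2).2 (mem_filter.1 y'.2).2
        (congrArg Subtype.val h)
  let g : α → α := fun y => if y ∈ B \ P then f y else y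
  have hg : IsAcyclicOn ↑(B \ P) g := by
    refine ⟨fun y hy => if_neg hy, fun y hy hyg => ?_⟩
    have horbit := iterate_mem_of_mem_periodicPts (fun y hy => if_neg hy) hyg hy
    have hyf := mem_periodicPts_of_eqOn (fun z hz => if_pos hz) horbit hyg
    exact (mem_sdiff.1 hy).2 (mem_filter.2 ⟨(mem_sdiff.1 hy).1, hyf⟩)
  refine ⟨⟨⟨P, mem_powerset.2 (filter_subset _ _)⟩, σ, g, hg⟩, Subtype.ext (funext fun y => ?_)⟩
  by_cases hyP : y ∈ P
  · exact Subtype.val_injective.extend_apply (Subtype.val ∘ σ) g ⟨y, hyP⟩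
  · change extend Subtype.val (Subtype.val ∘ σ) g y = f y
    rw [extend_apply' _ _ _ fun ⟨a, ha⟩ => hyP (ha ▸ a.2)]
    by_cases hyB : y ∈ B
    · exact if_pos (mem_sdiff.2 ⟨hyB, hyP⟩)
    · exact (if_neg fun h => hyB (mem_sdiff.1 h).1).trans (hf y hyB).symm

theorem pow_card_eq_sum_powerset [Fintype α] (B : Finset α) :
    Fintype.card α ^ #B =
      ∑ P ∈ B.powerset, (#P).factorial * Nat.card {g : α → α // IsAcyclicOn ↑(B \ P) g} := by
  rw [← card_supported, ← Nat.card_congr (Equiv.ofBijective _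
    ⟨extendPerm_injective B, extendPerm_surjective B⟩), Nat.card_sigma, ← sum_coe_sort B.powerset]
  simp [Nat.card_prod, Fintype.card_perm]

theorem card_isAcyclicOn_mul [Fintype α] (B : Finset α) :
    Nat.card {g : α → α // IsAcyclicOn ↑B g} * Fintype.card α =
      (Fintype.card α - #B) * Fintype.card α ^ #B := by
  set n := Fintype.card α
  induction hb : #B using Nat.strong_induction_on generalizing B with
  | _ b ih =>
    have hbn : b ≤ n := hb ▸ card_le_univ B
    set F : ℕ → ℕ := fun p => p.factorial * ((n - b + p) * n ^ (b - p))
    have hF : ∀ P ∈ B.powerset.erase ∅,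
        (#P).factorial * (Nat.card {g : α → α // IsAcyclicOn ↑(B \ P) g} * n) = F #P := by
      intro P hP
      obtain ⟨hP0, hPB⟩ := mem_erase.1 hP
      have hPb : #P ≤ b := hb ▸ card_le_card (mem_powerset.1 hPB)
      have hpos : 0 < #P := card_pos.2 (nonempty_iff_ne_empty.2 hP0)
      rw [ih (b - #P) (by omega) (B \ P) (by rw [card_sdiff_of_subset (mem_powerset.1 hPB), hb]),
        show n - (b - #P) = n - b + #P by omega]
    -- Both `A(B) * n` and `F 0` complete the same sum over nonempty `P` to `n ^ (b + 1)`.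
    have hdecomp := congrArg (· * n) (pow_card_eq_sum_powerset B)
    simp only [hb, sum_mul, mul_assoc] at hdecomp
    rw [← add_sum_erase _ _ (empty_mem_powerset B), sum_congr rfl hF] at hdecomp
    have hident : ∑ P ∈ B.powerset, F #P = n ^ (b + 1) := by
      rw [sum_powerset_apply_card, hb, ← sum_descFactorial_mul_sub_add_mul_pow hbn]
      refine sum_congr rfl fun p _ => ?_
      rw [smul_eq_mul, Nat.descFactorial_eq_factorial_mul_choose]
      ring
    rw [← add_sum_erase _ _ (empty_mem_powerset B)] at hident
    simp only [Finset.card_empty, Nat.factorial_zero, one_mul, Finset.sdiff_empty, add_zero,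
      Nat.sub_zero, F] at hdecomp hident
    rw [pow_succ] at hident
    exact Nat.add_right_cancel (hdecomp.symm.trans hident.symm)

end Forests

section Rho

variable {α : Type*} {f : α → α}

/-- `Semiconj x (rhoStep j) f` says that `f` runs along the path `x 0, …, x m` and then
returns to `x j`: the orbit of `x 0` is ρ-shaped. -/
def rhoStep {m : ℕ} (j : Fin (m + 1)) : Fin (m + 1) → Fin (m + 1) := Fin.lastCases j Fin.succ

theorem rhoStep_iterate_zero {m : ℕ} (j i : Fin (m + 1)) : (rhoStep j)^[i] 0 = i := by
  induction i using Fin.induction with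
  | zero => rfl
  | succ i ih =>
    rw [Fin.val_succ, ← Fin.val_castSucc, iterate_succ_apply', ih, rhoStep, Fin.lastCases_castSucc]

theorem rhoStep_iterate_succ {m : ℕ} (j : Fin (m + 1)) : (rhoStep j)^[m + 1] 0 = j := by
  have hlast := rhoStep_iterate_zero j (Fin.last m)
  rw [Fin.val_last] at hlast
  rw [iterate_succ_apply', hlast, rhoStep, Fin.lastCases_last]

theorem iterate_apply_zero_of_semiconj {m : ℕ} {x : Fin (m + 1) → α} {j : Fin (m + 1)}
    (hx : Semiconj x (rhoStep j) f) (i : Fin (m + 1)) : f^[i] (x 0) = x i := by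
  rw [← (hx.iterate_right i) 0, rhoStep_iterate_zero]

theorem semiconj_iterate_rhoStep {z : α} {m j : ℕ} (hj : j < m + 1)
    (h : f^[m + 1] z = f^[j] z) :
    Semiconj (fun i : Fin (m + 1) => f^[i] z) (rhoStep ⟨j, hj⟩) f := by
  intro i
  induction i using Fin.lastCases with
  | last =>
    simp only [rhoStep, Fin.lastCases_last, Fin.val_last]
    rw [← iterate_succ_apply' f, h]
  | cast i =>
    simp only [rhoStep, Fin.lastCases_castSucc, Fin.val_succ, Fin.val_castSucc,
      iterate_succ_apply']

variable [Finite α] [DecidableEq α]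

def rhoLength (f : α → α) (z : α) : ℕ := Nat.find (exists_iterate_eq_iterate f z)

theorem exists_lt_rhoLength (f : α → α) (z : α) :
    ∃ j < rhoLength f z, f^[rhoLength f z] z = f^[j] z :=
  Nat.find_spec (exists_iterate_eq_iterate f z)

theorem rhoLength_pos (f : α → α) (z : α) : 0 < rhoLength f z := by
  obtain ⟨j, hj, -⟩ := exists_lt_rhoLength f z
  exact j.zero_le.trans_lt hj

theorem iterate_injOn_rhoLength {z : α} {i j : ℕ} (hi : i < rhoLength f z)
    (hj : j < rhoLength f z) (h : f^[i] z = f^[j] z) : i = j := by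
  by_contra hne
  rcases Nat.lt_or_gt_of_ne hne with hlt | hlt
  · exact Nat.find_min _ hj ⟨i, hlt, h.symm⟩
  · exact Nat.find_min _ hi ⟨j, hlt, h⟩

theorem rhoLength_le_card [Fintype α] (f : α → α) (z : α) : rhoLength f z ≤ Fintype.card α := by
  simpa using Fintype.card_le_of_injective (fun i : Fin (rhoLength f z) => f^[i] z)
    fun i j h => Fin.ext (iterate_injOn_rhoLength i.2 j.2 h)

theorem rhoLength_eq_of_semiconj {m : ℕ} {x : Fin (m + 1) ↪ α} {j : Fin (m + 1)}
    (hx : Semiconj x (rhoStep j) f) : rhoLength f (x 0) = m + 1 := by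
  have hiter : ∀ i (hi : i < m + 1), f^[i] (x 0) = x ⟨i, hi⟩ := fun i hi =>
    iterate_apply_zero_of_semiconj hx ⟨i, hi⟩
  rw [rhoLength, Nat.find_eq_iff]
  refine ⟨⟨j, j.2, ?_⟩, fun k hk ⟨i, hik, h⟩ => hik.ne ?_⟩
  · rw [← (hx.iterate_right _) 0, rhoStep_iterate_succ, iterate_apply_zero_of_semiconj hx]
  · rw [hiter k (by omega), hiter i (by omega)] at h
    exact congrArg Fin.val (x.injective h).symm

end Rho

section Connected

variable {n : ℕ}

theorem connFun_iff {f : Fin n → Fin n} (z : Fin n) :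
    ConnFun f ↔ ∀ y, ∃ a b, f^[a] y = f^[b] z := by
  refine ⟨fun h y => eqvGen_iff_exists_iterate_eq.1 (h.2 y z), fun h => ⟨⟨z⟩, fun x y => ?_⟩⟩
  obtain ⟨a, b, hab⟩ := h x
  obtain ⟨c, d, hcd⟩ := h y
  exact .trans _ _ _ (eqvGen_iff_exists_iterate_eq.2 ⟨a, b, hab⟩)
    (.symm _ _ (eqvGen_iff_exists_iterate_eq.2 ⟨c, d, hcd⟩))

theorem connFun_extend_rhoStep {m : ℕ} (x : Fin (m + 1) ↪ Fin n) (j : Fin (m + 1))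
    {g : Fin n → Fin n} (hg : IsAcyclicOn (Set.range x)ᶜ g) :
    ConnFun (extend x (x ∘ rhoStep j) g) := by
  set f := extend x (x ∘ rhoStep j) g
  have hx := semiconj_extend x.injective (rhoStep j) g
  refine (connFun_iff (x 0)).2 fun y => ?_
  by_contra hy
  push Not at hy
  have horbit : ∀ a, f^[a] y ∈ (Set.range x)ᶜ := by
    rintro a ⟨i, hi⟩
    exact hy a i (by rw [← hi, iterate_apply_zero_of_semiconj hx])
  have hfg : Set.EqOn f g (Set.range x)ᶜ := fun w hw => extend_apply' _ _ _ hw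
  obtain ⟨a, ha⟩ := exists_iterate_mem_periodicPts g y
  exact hg.2 _ (iterate_eq_of_eqOn hfg horbit a ▸ horbit a) ha

noncomputable def extendRho :
    (Σ m : Fin n, Σ x : Fin (m + 1) ↪ Fin n,
      Fin (m + 1) × {g : Fin n → Fin n // IsAcyclicOn (Set.range x)ᶜ g}) →
      Fin n × {f : Fin n → Fin n // ConnFun f} :=
  fun ⟨_, x, j, g⟩ => (x 0, ⟨extend x (x ∘ rhoStep j) g.1, connFun_extend_rhoStep x j g.2⟩)

theorem extendRho_injective : Injective (extendRho (n := n)) := by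
  rintro ⟨m, x, j, g⟩ ⟨m', x', j', g'⟩ h
  simp only [extendRho, Prod.mk.injEq, Subtype.mk.injEq] at h
  obtain ⟨hz, hf⟩ := h
  have hx := semiconj_extend x.injective (rhoStep j) g.1
  have hx' := semiconj_extend x'.injective (rhoStep j') g'.1
  rw [hf] at hx
  obtain rfl : m = m' := Fin.ext <| by
    have hlen := rhoLength_eq_of_semiconj hx
    rw [hz, rhoLength_eq_of_semiconj hx'] at hlen
    omega
  obtain rfl : x = x' := Embedding.ext fun i => by
    rw [← iterate_apply_zero_of_semiconj hx, ← iterate_apply_zero_of_semiconj hx', hz]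
  obtain rfl : j = j' := x.injective <| by
    have hlast := hx (Fin.last m)
    have hlast' := hx' (Fin.last m)
    simp only [rhoStep, Fin.lastCases_last] at hlast hlast'
    rw [hlast, hlast']
  obtain rfl : g = g' := Subtype.ext <| funext fun y => by
    by_cases hy : y ∈ Set.range x
    · rw [g.2.1 y (not_not.2 hy), g'.2.1 y (not_not.2 hy)]
    · have := congrFun hf y
      rwa [extend_apply' _ _ _ hy, extend_apply' _ _ _ hy] at this
  rfl

theorem extendRho_surjective : Surjective (extendRho (n := n)) := by
  classical
  rintro ⟨z, f, hf⟩
  have hpos := rhoLength_pos f z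
  have hle : rhoLength f z ≤ n := by simpa using rhoLength_le_card f z
  obtain ⟨j, hj, hjf⟩ := exists_lt_rhoLength f z
  set m : Fin n := ⟨rhoLength f z - 1, by omega⟩
  have hm : (m : ℕ) + 1 = rhoLength f z := Nat.sub_add_cancel hpos
  let x : Fin (m + 1) ↪ Fin n := ⟨fun i => f^[i] z, by
    intro i i' h
    exact Fin.ext (iterate_injOn_rhoLength (hm ▸ i.2) (hm ▸ i'.2) h)⟩
  have hx : Semiconj x (rhoStep ⟨j, hm ▸ hj⟩) f :=
    semiconj_iterate_rhoStep (hm ▸ hj) (by rw [hm, hjf])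
  let g : Fin n → Fin n := fun y => if y ∈ Set.range x then y else f y
  have hfg : Set.EqOn g f (Set.range x)ᶜ := fun y hy => if_neg hy
  have hg : IsAcyclicOn (Set.range x)ᶜ g := by
    refine ⟨fun y hy => if_pos (not_not.1 hy), fun y hy hyg => ?_⟩
    have horbit := iterate_mem_of_mem_periodicPts (fun w hw => if_pos (not_not.1 hw)) hyg hy
    obtain ⟨a, b, hab⟩ := (connFun_iff z).1 hf y
    refine horbit a ?_
    rw [iterate_eq_of_eqOn hfg horbit, hab]
    exact hx.mapsTo_range.iterate b ⟨0, rfl⟩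
  refine ⟨⟨m, x, ⟨j, hm ▸ hj⟩, g, hg⟩, Prod.ext rfl (Subtype.ext (funext fun y => ?_))⟩
  change extend x (x ∘ rhoStep ⟨j, hm ▸ hj⟩) g y = f y
  by_cases hy : y ∈ Set.range x
  · obtain ⟨i, rfl⟩ := hy
    exact (x.injective.extend_apply _ _ i).trans (hx i)
  · exact (extend_apply' _ _ _ hy).trans (hfg hy)

theorem card_isAcyclicOn_compl_range_mul {m : ℕ} (x : Fin (m + 1) ↪ Fin n) :
    Nat.card {g : Fin n → Fin n // IsAcyclicOn (Set.range x)ᶜ g} * n =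
      (m + 1) * n ^ (n - (m + 1)) := by
  have hm : m + 1 ≤ n := by simpa using Fintype.card_le_of_embedding x
  have hrange : (Set.range x)ᶜ = ↑((univ.map x)ᶜ) := by simp
  have hcard := card_isAcyclicOn_mul ((univ.map x)ᶜ)
  rw [card_compl, card_map, card_univ, Fintype.card_fin, Fintype.card_fin,
    Nat.sub_sub_self hm] at hcard
  rwa [hrange]

theorem card_connFun_mul (hn : 1 ≤ n) :
    Nat.card {f : Fin n → Fin n // ConnFun f} * n =
      ∑ k ∈ Icc 1 n, k ^ 2 * (n - 1).descFactorial (k - 1) * n ^ (n - k) := by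
  have hcount : n * (Nat.card {f : Fin n → Fin n // ConnFun f} * n) =
      ∑ m : Fin n, n.descFactorial (m + 1) * ((m + 1) * ((m + 1) * n ^ (n - (m + 1)))) := by
    rw [← mul_assoc, ← Nat.card_fin n, ← Nat.card_prod, Nat.card_fin,
      ← Nat.card_congr (Equiv.ofBijective _ ⟨extendRho_injective, extendRho_surjective⟩),
      Nat.card_sigma, sum_mul]
    refine sum_congr rfl fun m _ => ?_
    simp [Nat.card_sigma, Nat.card_prod, sum_mul, mul_assoc, card_isAcyclicOn_compl_range_mul,
      Fintype.card_embedding_eq]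
  obtain ⟨N, rfl⟩ := Nat.exists_eq_add_of_le' hn
  refine Nat.eq_of_mul_eq_mul_left hn (hcount.trans ?_)
  rw [Fin.sum_univ_eq_sum_range (fun m => (N + 1).descFactorial (m + 1) *
      ((m + 1) * ((m + 1) * (N + 1) ^ (N + 1 - (m + 1))))), sum_Icc_one_eq_sum_range, mul_sum]
  refine sum_congr rfl fun i _ => ?_
  rw [Nat.succ_descFactorial_succ, Nat.add_sub_cancel, Nat.add_sub_cancel]
  ring

end Connected

/-- The identity
`Σ_{k=1}^n k²·(n-1)!/(n-k)!·n^(n-k-1) = n^(n-1) + (n-1)!·Σ_{j=0}^{n-2} n^j/j!`,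
stated in the cleared (multiplied by `n`) integer form, where
`(n-1)!/(n-k)! = (n-1).descFactorial (k-1)` and `(n-1)!/j! = (n-1).descFactorial (n-1-j)`;
both sides count the connected endofunctions on `{1,…,n}`. -/
theorem stmt12 (n : ℕ) (hn : 1 ≤ n) :
    (∑ k ∈ Finset.Icc 1 n, k ^ 2 * (n - 1).descFactorial (k - 1) * n ^ (n - k) =
        n ^ n + n * ∑ j ∈ Finset.range (n - 1), (n - 1).descFactorial (n - 1 - j) * n ^ j) ∧
      Nat.card {f : Fin n → Fin n // ConnFun f} * n =
        ∑ k ∈ Finset.Icc 1 n, k ^ 2 * (n - 1).descFactorial (k - 1) * n ^ (n - k) :=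
  ⟨sum_sq_descFactorial_mul_pow n hn, card_connFun_mul hn⟩
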